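/- arXiv:2309.11203 — 2 statements merged into one kernel-verified Lean document; each statement's English description precedes it below -/
import Mathlib

section
/- Let n ≥ 2 and let ε be a maximal Gallai coloring of the complete graph K_n, i.e., an edge coloring with no rainbow cycle whose image has exactly n − 1 colors. Then ε has a singleton color: there exists a color c in the image of ε such that exactly one edge of K_n is colored c. -/
/-- The edge set of the complete graph `K_n` on vertices `0, …, n-1`, encoded as
ordered pairs `(i, j)` with `i < j` (one for each unordered edge `{i, j}`). -/
abbrev KEdge (n : ℕ) := {p : Fin n × Fin n // p.1 < p.2}

/-- A coloring of the edges of `K_n` is a Gallai coloring if every cycle of `K_n`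
contains two distinct edges with the same color (no rainbow cycle). -/
def IsGallaiColoring {n : ℕ} {C : Type*} (ε : KEdge n → C) : Prop :=
  ∀ (v : Fin n) (w : (⊤ : SimpleGraph (Fin n)).Walk v v), w.IsCycle →
    ∃ p q : KEdge n, s(p.1.1, p.1.2) ∈ w.edges ∧ s(q.1.1, q.1.2) ∈ w.edges ∧
      p ≠ q ∧ ε p = ε q

/-!
Suppose every color class has at least two edges. Each vertex `v` then has a color all of whose
edges meet `v`: otherwise one edge of each color avoiding `v` would give a rainbow, hence acyclic,
graph with `n - 1` edges in which `v` is isolated, too many for a forest on `n` vertices. Two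
distinct edges share at most one vertex, so a color with two edges is confined to the star of at
most one vertex. The colors found are therefore distinct, and there would be `n` of them among
`n - 1`.
-/

open SimpleGraph Set

namespace SimpleGraph

variable {V : Type*} [Finite V] {G : SimpleGraph V}

theorem IsAcyclic.card_edgeSet_add_one_le [Nonempty V] (hG : G.IsAcyclic) :
    Nat.card G.edgeSet + 1 ≤ Nat.card V := by
  obtain ⟨T, hGT, -, hT⟩ := connected_top.exists_isTree_le_of_le_of_isAcyclic le_top hG
  rw [← (isTree_iff_connected_and_card.mp hT).2]
  gcongr
  exact Nat.card_mono (toFinite _) (edgeSet_mono hGT)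

theorem IsAcyclic.card_edgeSet_add_two_le (hG : G.IsAcyclic) {v w : V} (hvw : v ≠ w)
    (hv : G.neighborSet v = ∅) : Nat.card G.edgeSet + 2 ≤ Nat.card V := by
  have : Nonempty V := ⟨v⟩
  have hG' := (hG.sup_edge_of_not_reachable
    (not_reachable_of_neighborSet_left_eq_empty hvw hv)).card_edgeSet_add_one_le
  have hvw' : s(v, w) ∉ G.edgeSet := fun h => by simpa [hv] using G.mem_neighborSet v w |>.mpr h
  rw [edgeSet_sup, edgeSet_edge_of_ne hvw, union_singleton, Nat.card_coe_set_eq,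
    ncard_insert_of_notMem hvw', ← Nat.card_coe_set_eq] at hG'
  omega

end SimpleGraph

namespace KEdge

variable {n : ℕ}

def toSym2 (e : KEdge n) : Sym2 (Fin n) := s(e.1.1, e.1.2)

theorem toSym2_injective : Function.Injective (toSym2 (n := n)) := by
  rintro ⟨⟨a, b⟩, hab⟩ ⟨⟨c, d⟩, hcd⟩ h
  rcases Sym2.eq_iff.mp h with ⟨rfl, rfl⟩ | ⟨rfl, rfl⟩
  · rfl
  · exact absurd hab (asymm hcd)

theorem not_isDiag_toSym2 (e : KEdge n) : ¬ e.toSym2.IsDiag :=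
  fun h => e.2.ne (Sym2.mk_isDiag_iff.mp h)

theorem card_edgeSet_fromEdgeSet_image_toSym2 (S : Set (KEdge n)) :
    Nat.card (fromEdgeSet (toSym2 '' S)).edgeSet = S.ncard := by
  rw [edgeSet_fromEdgeSet, sdiff_eq_left.mpr, Nat.card_coe_set_eq,
    ncard_image_of_injective _ toSym2_injective]
  refine Set.disjoint_left.mpr ?_
  rintro _ ⟨e, -, rfl⟩
  exact e.not_isDiag_toSym2

theorem eq_of_one_lt_ncard_of_forall_mem {S : Set (KEdge n)} (hS : 1 < S.ncard) {a b : Fin n}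
    (ha : ∀ e ∈ S, a ∈ e.toSym2) (hb : ∀ e ∈ S, b ∈ e.toSym2) : a = b := by
  by_contra hab
  obtain ⟨e, e', he, he', hee'⟩ := (one_lt_ncard_iff (toFinite S)).mp hS
  exact hee' <| toSym2_injective <|
    Sym2.eq_of_ne_mem hab (ha e he) (hb e he) (ha e' he') (hb e' he')

end KEdge

namespace IsGallaiColoring

variable {n : ℕ} {C : Type*} {ε : KEdge n → C}

theorem isAcyclic_fromEdgeSet_image_toSym2 (hε : IsGallaiColoring ε) {S : Set (KEdge n)}
    (hS : InjOn ε S) : (fromEdgeSet (KEdge.toSym2 '' S)).IsAcyclic := by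
  intro v w hw
  have hmem : ∀ p : KEdge n, p.toSym2 ∈ w.edges → p ∈ S := fun p hp => by
    obtain ⟨q, hq, hqp⟩ := (edgeSet_fromEdgeSet _ ▸ w.edges_subset_edgeSet hp).1
    rwa [← KEdge.toSym2_injective hqp]
  obtain ⟨p, q, hp, hq, hpq, hpq'⟩ := hε v (w.mapLe le_top) (hw.mapLe le_top)
  rw [Walk.edges_mapLe_eq_edges] at hp hq
  exact hpq (hS (hmem p hp) (hmem q hq) hpq')

theorem exists_forall_mem_toSym2 (hε : IsGallaiColoring ε) (hn : 2 ≤ n)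
    (hcard : n - 1 ≤ (range ε).ncard) (v : Fin n) :
    ∃ c ∈ range ε, ∀ e, ε e = c → v ∈ e.toSym2 := by
  by_contra! h
  choose g hg hgv using fun c : range ε => h c c.2
  have hg_inj : Function.Injective g := fun c c' hcc' =>
    Subtype.ext <| by rw [← hg c, ← hg c', hcc']
  have hgε : InjOn ε (range g) := by
    rintro _ ⟨c, rfl⟩ _ ⟨c', rfl⟩ hcc'
    rw [hg c, hg c'] at hcc'
    exact congrArg g (Subtype.ext hcc')
  have hv : (fromEdgeSet (KEdge.toSym2 '' range g)).neighborSet v = ∅ := by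
    refine eq_empty_of_forall_notMem fun u hu => ?_
    obtain ⟨⟨_, ⟨c, rfl⟩, he⟩, -⟩ := hu
    exact hgv c (he ▸ Sym2.mem_mk_left v u)
  have := Fin.nontrivial_iff_two_le.mpr hn
  obtain ⟨w, hvw⟩ := exists_ne v
  have := (hε.isAcyclic_fromEdgeSet_image_toSym2 hgε).card_edgeSet_add_two_le hvw.symm hv
  rw [KEdge.card_edgeSet_fromEdgeSet_image_toSym2, ncard_range_of_injective hg_inj,
    Nat.card_coe_set_eq, Nat.card_eq_fintype_card, Fintype.card_fin] at this
  omega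

end IsGallaiColoring

/-- Every maximal Gallai coloring of `K_n` (`n ≥ 2`), i.e. a Gallai coloring whose
image has exactly `n - 1` colors, has a singleton color: a color in the image
attained by exactly one edge. -/
theorem maximal_gallai_coloring_has_singleton_color
    (n : ℕ) (hn : 2 ≤ n) {C : Type*} (ε : KEdge n → C)
    (hGallai : IsGallaiColoring ε) (hmax : (Set.range ε).ncard = n - 1) :
    ∃ c ∈ Set.range ε, {e : KEdge n | ε e = c}.ncard = 1 := by
  by_contra! hnone
  have hbig : ∀ c ∈ range ε, 1 < {e | ε e = c}.ncard := fun c hc =>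
    lt_of_le_of_ne ((ncard_pos (toFinite _)).mpr hc) (hnone c hc).symm
  choose F hF hFv using hGallai.exists_forall_mem_toSym2 hn hmax.ge
  have hF_inj : Function.Injective F := fun a b hab =>
    KEdge.eq_of_one_lt_ncard_of_forall_mem (hbig _ (hF a)) (hFv a) (hab ▸ hFv b)
  have hle := ncard_le_ncard (range_subset_iff.mpr hF)
  rw [ncard_range_of_injective hF_inj, Nat.card_eq_fintype_card, Fintype.card_fin, hmax] at hle
  omega
end

section
/- Let n ≥ 2 and let ε be a surjective coloring of the edge set {(i,j) : 1 ≤ i < j ≤ n} of the transitive tournament on n vertices using exactly n − 1 colors. Then ε is transitive, i.e., ε(i,k) ∈ {ε(i,j), ε(j,k)} for all 1 ≤ i < j < k ≤ n, if and only if the corresponding edge coloring of the complete graph K_n (coloring the edge {i,j} by ε(min(i,j), max(i,j))) is a Gallai coloring (no rainbow cycle) and the n − 1 colors ε(i, i+1), 1 ≤ i ≤ n−1, are pairwise distinct. -/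
/-- The edge `(a, b)`, for `a < b`. -/
def te {n : ℕ} (a b : Fin n) (h : a < b) : KEdge n := ⟨(a, b), h⟩

/-- A coloring of the edges of the transitive tournament is transitive if
`ε(i,k) ∈ {ε(i,j), ε(j,k)}` for all `i < j < k`. -/
def IsTransitiveColoring {n : ℕ} {C : Type*} (ε : KEdge n → C) : Prop :=
  ∀ (i j k : Fin n) (hij : i < j) (hjk : j < k),
    ε (te i k (hij.trans hjk)) = ε (te i j hij) ∨
      ε (te i k (hij.trans hjk)) = ε (te j k hjk)

/-- The edge `(i, i+1)`. -/
def consecEdge {n : ℕ} (i : ℕ) (h : i + 1 < n) : KEdge n :=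
  te ⟨i, Nat.lt_of_succ_lt h⟩ ⟨i + 1, h⟩ (Fin.mk_lt_mk.mpr (Nat.lt_succ_self i))

/-! In a complete graph, a coloring without rainbow triangles has no rainbow cycle: the chord
cutting a vertex `v₁` off a rainbow cycle `v, v₁, v₂, …` takes the color of `vv₁` or of `v₁v₂`,
which leaves a shorter rainbow cycle. So being Gallai is a condition on triangles only, and a
transitive coloring satisfies it.

If `ε` is transitive, or has no rainbow triangle and a rainbow path (which keeps `ε(i,i+1)` apart
from `ε(i+1,k)`), induction on `k - i` through the triangle `(i, i+1, k)` shows that `ε(i,k)` is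
the color of some path edge `(a, a+1)` with `i ≤ a < k`. For a transitive coloring
this puts all `n - 1` colors on the `n - 1` path edges, so the path is rainbow. Conversely, if the
path is rainbow then for `i < j < k` the colors `ε(i,j)` and `ε(j,k)` come from disjoint stretches
of it, hence differ, and the non-rainbow triangle `(i,j,k)` forces `ε(i,k)` to be one of them. -/

def NoRainbowTriangle {V C : Type*} (c : Sym2 V → C) : Prop :=
  ∀ a b d : V, a ≠ b → b ≠ d → d ≠ a →
    c s(a, b) = c s(b, d) ∨ c s(d, a) = c s(a, b) ∨ c s(d, a) = c s(b, d)

theorem List.Nodup.cons_of_eq_or_eq {α : Type*} {x y z : α} {l : List α}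
    (h : (x :: y :: l).Nodup) (hz : z = x ∨ z = y) : (z :: l).Nodup := by
  simp only [List.nodup_cons, List.mem_cons, not_or] at h ⊢
  rcases hz with rfl | rfl
  · exact ⟨h.1.2, h.2.2⟩
  · exact ⟨h.2.1, h.2.2⟩

namespace SimpleGraph

variable {V C : Type*}

theorem Walk.IsCycle.not_nodup_map_edges {c : Sym2 V → C} (hc : NoRainbowTriangle c) {v : V} :
    ∀ w : (⊤ : SimpleGraph V).Walk v v, w.IsCycle → ¬ (w.edges.map c).Nodup
  | .nil, hw => (hw.ne_nil rfl).elim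
  | .cons h .nil, _ => (h.ne rfl).elim
  | .cons (v := v₁) h₁ (.cons (v := v₂) h₂ p), hw => by
    obtain ⟨hq, hv₁⟩ := (Walk.cons_isCycle_iff _ h₁).1 hw
    obtain ⟨hp, -⟩ := (Walk.cons_isPath_iff h₂ p).1 hq
    have hv₂ : v₂ ≠ v := by
      rintro rfl
      exact hv₁ (by simp [Sym2.eq_swap])
    intro hnd
    simp only [Walk.edges_cons, List.map_cons] at hnd
    have hshort : (c s(v₂, v) :: p.edges.map c).Nodup := by
      refine hnd.cons_of_eq_or_eq ?_
      rcases hc v v₁ v₂ h₁.ne h₂.ne hv₂ with h | h | h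
      · exact absurd (h ▸ List.mem_cons_self) (List.nodup_cons.1 hnd).1
      · exact Or.inl h
      · exact Or.inr h
    have hchord : s(v, v₂) ∉ p.edges := fun he =>
      (List.nodup_cons.1 hshort).1 (List.mem_map_of_mem (Sym2.eq_swap ▸ he))
    have hadj : (⊤ : SimpleGraph V).Adj v v₂ := hv₂.symm
    refine Walk.IsCycle.not_nodup_map_edges hc (.cons hadj p)
      ((Walk.cons_isCycle_iff p hadj).2 ⟨hp, hchord⟩) ?_
    simpa [Sym2.eq_swap] using hshort
termination_by w => w.length

theorem noRainbowTriangle_of_forall_isCycle {c : Sym2 V → C}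
    (h : ∀ (v : V) (w : (⊤ : SimpleGraph V).Walk v v), w.IsCycle → ¬ (w.edges.map c).Nodup) :
    NoRainbowTriangle c := by
  intro a b d hab hbd hda
  have hcyc :
      (Walk.cons hab (.cons hbd (.cons hda .nil)) : (⊤ : SimpleGraph V).Walk a a).IsCycle := by
    simp [Walk.cons_isCycle_iff, Walk.cons_isPath_iff, hab, hbd, hda, hab.symm, hda.symm]
  have := h a _ hcyc
  simp only [Walk.edges_cons, Walk.edges_nil, List.map_cons, List.map_nil, List.nodup_cons,
    List.mem_cons, List.not_mem_nil, List.nodup_nil] at this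
  tauto

theorem forall_isCycle_not_nodup_map_edges_iff_noRainbowTriangle {c : Sym2 V → C} :
    (∀ (v : V) (w : (⊤ : SimpleGraph V).Walk v v), w.IsCycle → ¬ (w.edges.map c).Nodup) ↔
      NoRainbowTriangle c :=
  ⟨noRainbowTriangle_of_forall_isCycle, fun hc _ w hw => hw.not_nodup_map_edges hc w⟩

theorem noRainbowTriangle_of_forall_lt [LinearOrder V] {c : Sym2 V → C}
    (h : ∀ x y z : V, x < y → y < z → c s(x, z) = c s(x, y) ∨ c s(x, z) = c s(y, z)) :
    NoRainbowTriangle c := by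
  intro a b d hab hbd hda
  rcases hab.lt_or_gt with h₁ | h₁ <;> rcases hbd.lt_or_gt with h₂ | h₂ <;>
    rcases hda.lt_or_gt with h₃ | h₃ <;>
    -- in each of the six orders of `a, b, d`, `h` applies to the sorted triple
    grind [Sym2.eq_swap]

end SimpleGraph

namespace KEdge

variable {n : ℕ}

theorem sym2_injective : Function.Injective (fun p : KEdge n => s(p.1.1, p.1.2)) := by
  rintro ⟨⟨a, b⟩, hab⟩ ⟨⟨a', b'⟩, hab'⟩ h
  rcases Sym2.eq_iff.1 h with ⟨rfl, rfl⟩ | ⟨rfl, rfl⟩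
  · rfl
  · exact absurd (hab.trans hab') (lt_irrefl _)

theorem exists_sym2_eq {e : Sym2 (Fin n)} (he : ¬ e.IsDiag) :
    ∃ p : KEdge n, s(p.1.1, p.1.2) = e := by
  induction e using Sym2.ind with
  | _ a b =>
    rcases lt_or_gt_of_ne (Sym2.mk_isDiag_iff.not.1 he) with h | h
    · exact ⟨te a b h, rfl⟩
    · exact ⟨te b a h, Sym2.eq_swap⟩

end KEdge

-- `none` only on the diagonal, which is not an edge of `K_n`
def edgeColor {n : ℕ} {C : Type*} (ε : KEdge n → C) : Sym2 (Fin n) → Option C :=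
  Sym2.lift ⟨fun a b => if h : a < b then some (ε (te a b h))
    else if h : b < a then some (ε (te b a h)) else none, fun a b => by
      rcases lt_trichotomy a b with h | rfl | h
      · simp [h, h.not_gt]
      · rfl
      · simp [h, h.not_gt]⟩

section edgeColor

open SimpleGraph

variable {n : ℕ} {C : Type*} {ε : KEdge n → C}

theorem edgeColor_mk_of_lt {a b : Fin n} (h : a < b) :
    edgeColor ε s(a, b) = some (ε (te a b h)) := by
  simp [edgeColor, h]

theorem edgeColor_mk_of_gt {a b : Fin n} (h : b < a) :
    edgeColor ε s(a, b) = some (ε (te b a h)) := by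
  rw [Sym2.eq_swap, edgeColor_mk_of_lt]

theorem edgeColor_mk (p : KEdge n) : edgeColor ε s(p.1.1, p.1.2) = some (ε p) :=
  edgeColor_mk_of_lt p.2

theorem isGallaiColoring_iff_noRainbowTriangle :
    IsGallaiColoring ε ↔ NoRainbowTriangle (edgeColor ε) := by
  rw [← forall_isCycle_not_nodup_map_edges_iff_noRainbowTriangle]
  refine forall₃_congr fun v w hw => ?_
  rw [List.nodup_map_iff_inj_on hw.edges_nodup]
  constructor
  · rintro ⟨p, q, hp, hq, hne, hpq⟩ hinj
    exact hne (KEdge.sym2_injective (hinj _ hp _ hq (by rw [edgeColor_mk, edgeColor_mk, hpq])))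
  · intro h
    push Not at h
    obtain ⟨x, hx, y, hy, hxy, hne⟩ := h
    have hdiag : ∀ e ∈ w.edges, ¬ e.IsDiag := fun e he =>
      not_isDiag_of_mem_edgeSet _ (w.edges_subset_edgeSet he)
    obtain ⟨p, rfl⟩ := KEdge.exists_sym2_eq (hdiag x hx)
    obtain ⟨q, rfl⟩ := KEdge.exists_sym2_eq (hdiag y hy)
    rw [edgeColor_mk, edgeColor_mk, Option.some_inj] at hxy
    exact ⟨p, q, hx, hy, fun h => hne (h ▸ rfl), hxy⟩

theorem IsTransitiveColoring.noRainbowTriangle (ht : IsTransitiveColoring ε) :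
    NoRainbowTriangle (edgeColor ε) :=
  noRainbowTriangle_of_forall_lt fun x y z hxy hyz => by
    simp only [edgeColor_mk_of_lt hxy, edgeColor_mk_of_lt hyz, edgeColor_mk_of_lt (hxy.trans hyz),
      Option.some_inj]
    exact ht x y z hxy hyz

theorem NoRainbowTriangle.transitive_of_ne (h : NoRainbowTriangle (edgeColor ε)) {i j k : Fin n}
    (hij : i < j) (hjk : j < k) (hne : ε (te i j hij) ≠ ε (te j k hjk)) :
    ε (te i k (hij.trans hjk)) = ε (te i j hij) ∨ ε (te i k (hij.trans hjk)) = ε (te j k hjk) := by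
  simpa [edgeColor_mk_of_lt, edgeColor_mk_of_gt, hij, hjk, hij.trans hjk, hne] using
    h i j k hij.ne hjk.ne (hij.trans hjk).ne'

end edgeColor

section consecColor

variable {n : ℕ} {C : Type*} (ε : KEdge n → C)

def consecColor (a : Fin (n - 1)) : C :=
  ε (consecEdge a.1 (by have := a.2; omega))

def IsConsecColorBetween (i k : ℕ) (x : C) : Prop :=
  ∃ a : Fin (n - 1), i ≤ a ∧ (a : ℕ) < k ∧ consecColor ε a = x

variable {ε}

theorem IsConsecColorBetween.ne (hinj : Function.Injective (consecColor ε)) {i j k : ℕ} {x y : C}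
    (hx : IsConsecColorBetween ε i j x) (hy : IsConsecColorBetween ε j k y) : x ≠ y := by
  obtain ⟨a, -, ha, rfl⟩ := hx
  obtain ⟨b, hb, -, rfl⟩ := hy
  exact hinj.ne (Fin.ne_of_lt (by omega))

theorem isConsecColorBetween_of_step
    (hstep : ∀ (i j k : Fin n) (hij : i < j) (hjk : j < k),
      IsConsecColorBetween ε i j (ε (te i j hij)) → IsConsecColorBetween ε j k (ε (te j k hjk)) →
        ε (te i k (hij.trans hjk)) = ε (te i j hij) ∨ ε (te i k (hij.trans hjk)) = ε (te j k hjk))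
    (i k : Fin n) (hik : i < k) : IsConsecColorBetween ε i k (ε (te i k hik)) := by
  have hik' : (i : ℕ) < k := hik
  by_cases hk : (k : ℕ) = i + 1
  · refine ⟨⟨i, by omega⟩, le_rfl, by omega, congrArg ε ?_⟩
    exact Subtype.ext (Prod.ext rfl (Fin.ext hk.symm))
  · let j : Fin n := ⟨i + 1, by omega⟩
    have hij : i < j := Fin.lt_def.2 (Nat.lt_succ_self _)
    have hjk : j < k := Fin.lt_def.2 (by simp only [j]; omega)
    have hi := isConsecColorBetween_of_step hstep i j hij
    have hj := isConsecColorBetween_of_step hstep j k hjk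
    rcases hstep i j k hij hjk hi hj with h | h
    · obtain ⟨a, ha₁, ha₂, ha⟩ := hi
      exact ⟨a, ha₁, ha₂.trans hjk, ha.trans h.symm⟩
    · obtain ⟨a, ha₁, ha₂, ha⟩ := hj
      exact ⟨a, (Nat.le_succ _).trans ha₁, ha₂, ha.trans h.symm⟩
termination_by (k : ℕ) - i

theorem IsTransitiveColoring.isConsecColorBetween (ht : IsTransitiveColoring ε)
    (i k : Fin n) (hik : i < k) : IsConsecColorBetween ε i k (ε (te i k hik)) :=
  isConsecColorBetween_of_step (fun i j k hij hjk _ _ => ht i j k hij hjk) i k hik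

theorem NoRainbowTriangle.isConsecColorBetween (htri : NoRainbowTriangle (edgeColor ε))
    (hinj : Function.Injective (consecColor ε)) (i k : Fin n) (hik : i < k) :
    IsConsecColorBetween ε i k (ε (te i k hik)) :=
  isConsecColorBetween_of_step
    (fun _ _ _ hij hjk hi hj => htri.transitive_of_ne hij hjk (hi.ne hinj hj)) i k hik

theorem IsTransitiveColoring.injective_consecColor (ht : IsTransitiveColoring ε)
    (hcard : (Set.range ε).ncard = n - 1) : Function.Injective (consecColor ε) := by
  have hrange : Set.range (consecColor ε) = Set.range ε := by
    refine subset_antisymm (Set.range_subset_iff.2 fun _ => Set.mem_range_self _) ?_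
    rintro _ ⟨p, rfl⟩
    obtain ⟨a, -, -, ha⟩ := ht.isConsecColorBetween p.1.1 p.1.2 p.2
    exact ⟨a, ha⟩
  rw [← Set.injOn_univ]
  refine Set.injOn_of_ncard_image_eq ?_
  rw [Set.image_univ, hrange, hcard, Set.ncard_univ, Nat.card_eq_fintype_card, Fintype.card_fin]

end consecColor

/-- Let `n ≥ 2` and let `ε` be a coloring of the edges of the transitive tournament
on `n` vertices using exactly `n - 1` colors.  Then `ε` is transitive if and only
if the corresponding edge coloring of `K_n` is a Gallai coloring and the `n - 1`
colors of the consecutive edges `(i, i+1)` are pairwise distinct. -/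
theorem transitive_iff_gallai_and_rainbow_path
    (n : ℕ) {C : Type*} (ε : KEdge n → C)
    (hsurj : (Set.range ε).ncard = n - 1) :
    IsTransitiveColoring ε ↔
      (IsGallaiColoring ε ∧
        Function.Injective
          (fun i : Fin (n - 1) => ε (consecEdge i.1 (by have := i.2; omega)))) := by
  constructor
  · intro ht
    exact ⟨isGallaiColoring_iff_noRainbowTriangle.2 ht.noRainbowTriangle,
      ht.injective_consecColor hsurj⟩
  · rintro ⟨hg, hinj⟩ i j k hij hjk
    have htri := isGallaiColoring_iff_noRainbowTriangle.1 hg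
    exact htri.transitive_of_ne hij hjk
      ((htri.isConsecColorBetween hinj i j hij).ne hinj (htri.isConsecColorBetween hinj j k hjk))
end
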